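/- arXiv:2109.04001 — 2 statements merged into one kernel-verified Lean document; each statement's English description precedes it below -/
import Mathlib

section
/- As τ → 1⁻, the τ-expectile of a bounded random variable X converges to the essential supremum of X; as τ → 0⁺, it converges to the essential infimum of X. -/
/-!
Write `U q = E[(X - q)₊]` and `L q = E[(q - X)₊]`, so that `q` is a `τ`-expectile iff
`τ U q = (1 - τ) L q`. Above `essSup X` the function `U` vanishes, which forces `L` to vanish
too; hence no expectile exceeds `essSup X`. For `a < essSup X` we have `U a > 0`, and since `U` is
antitone and `L` monotone, a `τ`-expectile `q ≤ a` satisfies `τ (U a + L a) ≤ L a`, which fails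
once `τ > L a / (U a + L a)`. The `essInf` half is the same statement for `-X`, whose
`(1 - τ)`-expectile is minus the `τ`-expectile of `X`.
-/

open MeasureTheory Set Filter
open scoped Topology

theorem MeasureTheory.MemLp.isBoundedUnder_abs_of_top {Ω : Type*} [MeasurableSpace Ω]
    {μ : Measure Ω} {X : Ω → ℝ} (hX : MemLp X ⊤ μ) :
    IsBoundedUnder (· ≤ ·) (ae μ) fun ω => |X ω| := by
  have h := hX.eLpNorm_lt_top
  rw [eLpNorm_exponent_top, eLpNormEssSup_lt_top_iff_isBoundedUnder] at h
  obtain ⟨C, hC⟩ := h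
  refine ⟨C, eventually_map.2 ((eventually_map.1 hC).mono fun ω h => ?_)⟩
  simpa [← Real.norm_eq_abs, ← coe_nnnorm] using h

theorem essSup_neg {Ω : Type*} [MeasurableSpace Ω] (μ : Measure Ω) (X : Ω → ℝ) :
    essSup (-X) μ = -essInf X μ := by
  rw [essSup_eq_sInf, essInf_eq_sSup, Real.sInf_def]
  congr 2
  ext a
  simp [lt_neg]

section PartialMoments

variable {Ω : Type*} [MeasurableSpace Ω] (μ : Measure Ω) (X : Ω → ℝ)

noncomputable def upperPartialMoment (q : ℝ) : ℝ := ∫ ω, max (X ω - q) 0 ∂μ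

noncomputable def lowerPartialMoment (q : ℝ) : ℝ := ∫ ω, max (q - X ω) 0 ∂μ

def IsExpectile (τ q : ℝ) : Prop :=
  τ * upperPartialMoment μ X q = (1 - τ) * lowerPartialMoment μ X q

variable {μ X}

theorem upperPartialMoment_neg (q : ℝ) :
    upperPartialMoment μ (-X) (-q) = lowerPartialMoment μ X q := by
  simp only [upperPartialMoment, lowerPartialMoment, Pi.neg_apply, neg_sub_neg]

theorem lowerPartialMoment_neg (q : ℝ) :
    lowerPartialMoment μ (-X) (-q) = upperPartialMoment μ X q := by
  simp only [upperPartialMoment, lowerPartialMoment, Pi.neg_apply, neg_sub_neg]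

theorem IsExpectile.neg {τ q : ℝ} (h : IsExpectile μ X τ q) :
    IsExpectile μ (-X) (1 - τ) (-q) := by
  rw [IsExpectile, upperPartialMoment_neg, lowerPartialMoment_neg, sub_sub_cancel, h.symm]

theorem lowerPartialMoment_nonneg (q : ℝ) : 0 ≤ lowerPartialMoment μ X q :=
  integral_nonneg fun _ => le_max_right _ _

variable [IsFiniteMeasure μ]

theorem integrable_max_sub_const (hX : Integrable X μ) (q : ℝ) :
    Integrable (fun ω => max (X ω - q) 0) μ :=
  (hX.sub (integrable_const q)).pos_part

theorem integrable_max_const_sub (hX : Integrable X μ) (q : ℝ) :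
    Integrable (fun ω => max (q - X ω) 0) μ :=
  ((integrable_const q).sub hX).pos_part

theorem upperPartialMoment_antitone (hX : Integrable X μ) : Antitone (upperPartialMoment μ X) :=
  fun _ _ hpq => integral_mono (integrable_max_sub_const hX _)
    (integrable_max_sub_const hX _) fun _ => by gcongr

theorem lowerPartialMoment_monotone (hX : Integrable X μ) : Monotone (lowerPartialMoment μ X) :=
  fun _ _ hpq => integral_mono (integrable_max_const_sub hX _)
    (integrable_max_const_sub hX _) fun _ => by gcongr

theorem upperPartialMoment_eq_zero_iff (hX : Integrable X μ) {q : ℝ} :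
    upperPartialMoment μ X q = 0 ↔ X ≤ᵐ[μ] fun _ => q := by
  rw [upperPartialMoment, integral_eq_zero_iff_of_nonneg (f := fun ω => max (X ω - q) 0)
    (fun _ => le_max_right _ _) (integrable_max_sub_const hX q)]
  simp [EventuallyLE, EventuallyEq]

theorem lowerPartialMoment_eq_zero_iff (hX : Integrable X μ) {q : ℝ} :
    lowerPartialMoment μ X q = 0 ↔ (fun _ => q) ≤ᵐ[μ] X := by
  rw [← upperPartialMoment_neg, upperPartialMoment_eq_zero_iff hX.neg]
  simp [EventuallyLE]

theorem upperPartialMoment_pos_of_lt_essSup (hX : Integrable X μ)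
    (hXc : IsCoboundedUnder (· ≤ ·) (ae μ) X) {q : ℝ} (hq : q < essSup X μ) :
    0 < upperPartialMoment μ X q := by
  refine (integral_nonneg fun _ => le_max_right _ _).lt_of_ne' fun h0 => hq.not_ge ?_
  exact essSup_le_of_ae_le q ((upperPartialMoment_eq_zero_iff hX).1 h0) hXc

theorem IsExpectile.le_essSup [NeZero μ] (hX : Integrable X μ)
    (hXb : IsBoundedUnder (· ≤ ·) (ae μ) X) {τ q : ℝ} (h : IsExpectile μ X τ q) (hτ : τ < 1) :
    q ≤ essSup X μ := by
  by_contra! hlt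
  have hU : upperPartialMoment μ X q = 0 :=
    (upperPartialMoment_eq_zero_iff hX).2 <| (ae_le_essSup hXb).mono fun _ h => h.trans hlt.le
  have hL : lowerPartialMoment μ X q = 0 := by
    simpa [IsExpectile, hU, (sub_pos.2 hτ).ne'] using h
  obtain ⟨ω, hqX, hXM⟩ :=
    (((lowerPartialMoment_eq_zero_iff hX).1 hL).and (ae_le_essSup hXb)).exists
  exact (hqX.trans hXM).not_gt hlt

theorem IsExpectile.mul_le (hX : Integrable X μ) {τ q p : ℝ} (h : IsExpectile μ X τ q)
    (hτ₀ : 0 ≤ τ) (hτ₁ : τ ≤ 1) (hqp : q ≤ p) :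
    τ * (upperPartialMoment μ X p + lowerPartialMoment μ X p) ≤ lowerPartialMoment μ X p := by
  have hU := upperPartialMoment_antitone hX hqp
  have hL := lowerPartialMoment_monotone hX hqp
  calc τ * (upperPartialMoment μ X p + lowerPartialMoment μ X p)
      ≤ τ * upperPartialMoment μ X q + τ * lowerPartialMoment μ X p := by
        rw [mul_add]; gcongr
    _ = (1 - τ) * lowerPartialMoment μ X q + τ * lowerPartialMoment μ X p := by rw [h]
    _ ≤ (1 - τ) * lowerPartialMoment μ X p + τ * lowerPartialMoment μ X p := by gcongr
    _ = lowerPartialMoment μ X p := by ring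

theorem tendsto_essSup_of_isExpectile [NeZero μ] (hX : Integrable X μ)
    (hXb : IsBoundedUnder (· ≤ ·) (ae μ) X) (hXc : IsCoboundedUnder (· ≤ ·) (ae μ) X)
    {e : ℝ → ℝ} (he : ∀ τ ∈ Ioo (0 : ℝ) 1, IsExpectile μ X τ (e τ)) :
    Tendsto e (𝓝[<] 1) (𝓝 (essSup X μ)) := by
  refine tendsto_order.2 ⟨fun a ha => ?_, fun b hb => ?_⟩
  · set U := upperPartialMoment μ X a
    set L := lowerPartialMoment μ X a
    have hU : 0 < U := upperPartialMoment_pos_of_lt_essSup hX hXc ha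
    have hL : 0 ≤ L := lowerPartialMoment_nonneg a
    have hθ : L / (U + L) < 1 := (div_lt_one (by positivity)).2 (by linarith)
    filter_upwards [Ioo_mem_nhdsLT hθ] with τ ⟨hθτ, hτ₁⟩
    have hτ₀ : 0 < τ := (div_nonneg hL (by positivity)).trans_lt hθτ
    by_contra! hea
    have : τ * (U + L) ≤ L := (he τ ⟨hτ₀, hτ₁⟩).mul_le hX hτ₀.le hτ₁.le hea
    rw [div_lt_iff₀ (by positivity)] at hθτ
    linarith
  · filter_upwards [Ioo_mem_nhdsLT one_pos] with τ hτ
    exact ((he τ hτ).le_essSup hX hXb hτ.2).trans_lt hb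

end PartialMoments

/-- As τ → 1⁻ the τ-expectile of a bounded random variable X converges to
the essential supremum of X; as τ → 0⁺ it converges to the essential infimum of X.
Here e : ℝ → ℝ assigns to each τ ∈ (0,1) the τ-expectile of X, characterized by the
first-order condition. -/
theorem expectile_tendsto_essSup_essInf
    {Ω : Type*} [MeasurableSpace Ω] (μ : Measure Ω) [IsProbabilityMeasure μ]
    (X : Ω → ℝ) (hX : MemLp X ⊤ μ)
    (e : ℝ → ℝ)
    (he : ∀ τ ∈ Set.Ioo (0 : ℝ) 1,
      τ * ∫ ω, max (X ω - e τ) 0 ∂μ = (1 - τ) * ∫ ω, max (e τ - X ω) 0 ∂μ) :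
    Tendsto e (nhdsWithin 1 (Set.Iio 1)) (nhds (essSup X μ)) ∧
    Tendsto e (nhdsWithin 0 (Set.Ioi 0)) (nhds (essInf X μ)) := by
  obtain ⟨hXa, hXb⟩ := isBoundedUnder_le_abs.1 hX.isBoundedUnder_abs_of_top
  have hint : Integrable X μ := hX.integrable le_top
  refine ⟨tendsto_essSup_of_isExpectile hint hXa hXb.isCoboundedUnder_le he, ?_⟩
  have hflip : Tendsto (fun τ : ℝ => 1 - τ) (𝓝[>] 0) (𝓝[<] 1) :=
    tendsto_nhdsWithin_of_tendsto_nhds_of_eventually_within _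
      (((continuous_sub_left 1).tendsto' 0 1 (sub_zero 1)).mono_left nhdsWithin_le_nhds)
      (eventually_nhdsWithin_of_forall fun τ (hτ : 0 < τ) => sub_lt_self 1 hτ)
  have hneg := tendsto_essSup_of_isExpectile (e := fun τ => -e (1 - τ)) hint.neg
    (isBoundedUnder_le_neg.2 hXb) (isBoundedUnder_ge_neg.2 hXa).isCoboundedUnder_le
    fun τ hτ => by
      simpa using IsExpectile.neg (he (1 - τ) ⟨by linarith [hτ.2], by linarith [hτ.1]⟩)
  rw [essSup_neg] at hneg
  simpa using (hneg.comp hflip).neg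
end

section
/- The derivative of the expectile score function S(q) := τ·E[((q−X)₊)²] + (1−τ)·E[((q−X)₋)²] with respect to q equals 2·(τ·E[(q−X)₊] − (1−τ)·E[(X−q)₊]), for every q ∈ ℝ and square-integrable X. -/
open MeasureTheory Set Filter Topology

/-! Each of the two integrands is `(·)₊²` composed with an affine function of `q`, and
`y ↦ y₊²` is differentiable with derivative `2 y₊`. Since `p ↦ (p - X)₊` is monotone, on the
ball of radius one around `q` that derivative is dominated by the integrable `2 (q + 1 - X)₊`,
so differentiation passes under the integral. -/

theorem hasDerivAt_max_zero_sq (a : ℝ) :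
    HasDerivAt (fun y : ℝ => max y 0 ^ 2) (2 * max a 0) a := by
  rcases lt_trichotomy a 0 with ha | rfl | ha
  · have hzero : (fun y : ℝ => max y 0 ^ 2) =ᶠ[𝓝 a] fun _ => 0 :=
      (eventually_lt_nhds ha).mono fun y hy => by simp [hy.le]
    simpa [ha.le] using (hasDerivAt_const a (0 : ℝ)).congr_of_eventuallyEq hzero
  · have hleft : HasDerivWithinAt (fun y : ℝ => max y 0 ^ 2) 0 (Iic 0) 0 :=
      (hasDerivWithinAt_const 0 _ (0 : ℝ)).congr (fun y hy => by simp [mem_Iic.mp hy]) (by simp)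
    have hright : HasDerivWithinAt (fun y : ℝ => max y 0 ^ 2) 0 (Ici 0) 0 := by
      refine ((hasDerivAt_pow 2 (0 : ℝ)).hasDerivWithinAt).congr
        (fun y hy => by simp [mem_Ici.mp hy]) (by simp) |>.congr_deriv (by simp)
    simpa [Iic_union_Ici] using hleft.union hright
  · have hsq : (fun y : ℝ => max y 0 ^ 2) =ᶠ[𝓝 a] fun y => y ^ 2 :=
      (eventually_gt_nhds ha).mono fun y hy => by simp [hy.le]
    simpa [ha.le, mul_comm] using (hasDerivAt_pow 2 a).congr_of_eventuallyEq hsq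

section

variable {Ω : Type*} [MeasurableSpace Ω] {μ : Measure Ω} [IsFiniteMeasure μ] {X : Ω → ℝ}

theorem integrable_max_const_sub_zero (hX : Integrable X μ) (c : ℝ) :
    Integrable (fun ω => max (c - X ω) 0) μ :=
  ((integrable_const c).sub hX).pos_part

theorem integrable_max_const_sub_zero_sq (hX : MemLp X 2 μ) (c : ℝ) :
    Integrable (fun ω => max (c - X ω) 0 ^ 2) μ :=
  ((memLp_const c).sub hX).pos_part.integrable_sq

theorem hasDerivAt_integral_max_sub_zero_sq (hX : MemLp X 2 μ) (q : ℝ) :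
    HasDerivAt (fun p => ∫ ω, max (p - X ω) 0 ^ 2 ∂μ)
      (2 * ∫ ω, max (q - X ω) 0 ∂μ) q := by
  have hX₁ : Integrable X μ := hX.integrable one_le_two
  have hbound : ∀ ω, ∀ p ∈ Metric.ball q 1, ‖2 * max (p - X ω) 0‖ ≤ 2 * max (q + 1 - X ω) 0 := by
    intro ω p hp
    have hpq : p < q + 1 := by
      linarith [(abs_lt.mp (Real.dist_eq p q ▸ Metric.mem_ball.mp hp)).2]
    rw [Real.norm_of_nonneg (by positivity)]
    gcongr
  have hderiv := hasDerivAt_integral_of_dominated_loc_of_deriv_le (μ := μ)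
    (F := fun p ω => max (p - X ω) 0 ^ 2) (F' := fun p ω => 2 * max (p - X ω) 0)
    (Metric.ball_mem_nhds q one_pos)
    (Eventually.of_forall fun p => (integrable_max_const_sub_zero_sq hX p).aestronglyMeasurable)
    (integrable_max_const_sub_zero_sq hX q)
    ((integrable_max_const_sub_zero hX₁ q).const_mul 2).aestronglyMeasurable
    (ae_of_all _ (hbound ·)) ((integrable_max_const_sub_zero hX₁ (q + 1)).const_mul 2)
    (ae_of_all _ fun ω p _ => (hasDerivAt_max_zero_sq (p - X ω)).comp_sub_const p (X ω))
  simpa only [integral_const_mul] using hderiv.2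

theorem hasDerivAt_integral_max_sub_zero_sq' (hX : MemLp X 2 μ) (q : ℝ) :
    HasDerivAt (fun p => ∫ ω, max (X ω - p) 0 ^ 2 ∂μ)
      (-(2 * ∫ ω, max (X ω - q) 0 ∂μ)) q := by
  have hneg := (hasDerivAt_integral_max_sub_zero_sq hX.neg (-q)).comp q (hasDerivAt_neg q)
  simpa [Function.comp_def, neg_add_eq_sub] using hneg

end

theorem expectile_score_hasDerivAt_general
    {Ω : Type*} [MeasurableSpace Ω] (μ : Measure Ω) [IsProbabilityMeasure μ]
    (τ : ℝ)
    (X : Ω → ℝ) (hX : MemLp X 2 μ) (q : ℝ) :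
    HasDerivAt (fun p : ℝ =>
        τ * ∫ ω, (max (p - X ω) 0) ^ 2 ∂μ + (1 - τ) * ∫ ω, (max (X ω - p) 0) ^ 2 ∂μ)
      (2 * (τ * ∫ ω, max (q - X ω) 0 ∂μ - (1 - τ) * ∫ ω, max (X ω - q) 0 ∂μ)) q := by
  have hsum := ((hasDerivAt_integral_max_sub_zero_sq hX q).const_mul τ).add
    ((hasDerivAt_integral_max_sub_zero_sq' hX q).const_mul (1 - τ))
  exact hsum.congr_deriv (by ring)

/-- The derivative of the expectile score function
S(q) := τ·E[((q−X)₊)²] + (1−τ)·E[((q−X)₋)²] with respect to q equals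
2·(τ·E[(q−X)₊] − (1−τ)·E[(X−q)₊]), for every q ∈ ℝ and square-integrable X. -/
theorem expectile_score_hasDerivAt
    {Ω : Type*} [MeasurableSpace Ω] (μ : Measure Ω) [IsProbabilityMeasure μ]
    (τ : ℝ) (hτ : τ ∈ Set.Ioo (0 : ℝ) 1)
    (X : Ω → ℝ) (hX : MemLp X 2 μ) (q : ℝ) :
    HasDerivAt (fun p : ℝ =>
        τ * ∫ ω, (max (p - X ω) 0) ^ 2 ∂μ + (1 - τ) * ∫ ω, (max (X ω - p) 0) ^ 2 ∂μ)
      (2 * (τ * ∫ ω, max (q - X ω) 0 ∂μ - (1 - τ) * ∫ ω, max (X ω - q) 0 ∂μ)) q :=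
  expectile_score_hasDerivAt_general μ τ X hX q
end
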